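/- Let F be a division ring, V an algebraic conjugacy class with central minimal polynomial χ_V, and Δ = {γ₁,…,γ_m} ⊂ V a left P-basis of V (i.e., left P-independent with left minimal polynomial equal to χ_V). Then for any f ∈ F[z] and any γ ∈ V, f^ℓ(γ) = Σᵢ pᵢ^ℓ(γ)·pᵢ^ℓ(γᵢ)⁻¹·f^ℓ(γᵢ), where pᵢ is the left minimal polynomial of Δ∖{γᵢ}. -/

import Mathlib

open Polynomial

/-- Left evaluation of a polynomial `f = Σ zʲ fⱼ` at `a`: `f^ℓ(a) = Σ aʲ fⱼ`.
(Mathlib's `Polynomial.eval` is the right evaluation `Σ fⱼ aʲ`.) -/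
noncomputable def lEval {F : Type*} [DivisionRing F] (a : F) (f : F[X]) : F :=
  f.sum fun j c => a ^ j * c

/-- p is the left minimal polynomial of Δ: the monic generator of the right ideal
of polynomials left-vanishing on Δ. -/
def IsLeftMinPoly {F : Type*} [DivisionRing F] (Δ : Set F) (p : F[X]) : Prop :=
  p.Monic ∧ (∀ a ∈ Δ, lEval a p = 0) ∧
    ∀ f : F[X], (∀ a ∈ Δ, lEval a f = 0) → ∃ h : F[X], f = p * h

/-!
Put `cᵢ = pᵢ^ℓ(γᵢ)⁻¹ f^ℓ(γᵢ)`. Since `pᵢ` left-vanishes at every `γⱼ` with `j ≠ i`, the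
polynomial `g = f - Σ pᵢ cᵢ` left-vanishes on `Δ`, so it lies in the right ideal `χ_V F[z]`.
Because `χ_V` has central coefficients, `(χ_V h)^ℓ(x) = χ_V(x) h^ℓ(x)`, which vanishes on the
whole class `V`. Hence `f^ℓ(x) = Σ pᵢ^ℓ(x) cᵢ` for every `x ∈ V`.
-/

section LeftEvaluation

variable {F : Type*} [DivisionRing F]

lemma lEval_add (a : F) (f g : F[X]) : lEval a (f + g) = lEval a f + lEval a g :=
  sum_add_index f g _ (fun _ => mul_zero _) (fun _ _ _ => mul_add _ _ _)

noncomputable def lEvalAddHom (a : F) : F[X] →+ F :=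
  AddMonoidHom.mk' (lEval a) (lEval_add a)

lemma lEval_sub (a : F) (f g : F[X]) : lEval a (f - g) = lEval a f - lEval a g :=
  map_sub (lEvalAddHom a) f g

lemma lEval_sum {ι : Type*} (s : Finset ι) (a : F) (g : ι → F[X]) :
    lEval a (∑ i ∈ s, g i) = ∑ i ∈ s, lEval a (g i) :=
  map_sum (lEvalAddHom a) g s

lemma lEval_monomial (a : F) (n : ℕ) (b : F) : lEval a (monomial n b) = a ^ n * b :=
  sum_monomial_index _ _ (mul_zero _)

lemma lEval_mul_C (a : F) (f : F[X]) (c : F) : lEval a (f * C c) = lEval a f * c := by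
  induction f using Polynomial.induction_on' with
  | add p q hp hq => rw [add_mul, lEval_add, lEval_add, hp, hq, add_mul]
  | monomial n b => rw [monomial_mul_C, lEval_monomial, lEval_monomial, mul_assoc]

lemma lEval_mul_X_pow (a : F) (f : F[X]) (n : ℕ) :
    lEval a (f * X ^ n) = a ^ n * lEval a f := by
  induction f using Polynomial.induction_on' with
  | add p q hp hq => rw [add_mul, lEval_add, hp, hq, lEval_add, mul_add]
  | monomial k b =>
    rw [monomial_mul_X_pow, lEval_monomial, lEval_monomial, ← mul_assoc, ← pow_add, add_comm]

lemma lEval_eq_eval_of_coeff_mem_center {χ : F[X]} (hcen : ∀ n, χ.coeff n ∈ Subring.center F)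
    (x : F) : lEval x χ = χ.eval x := by
  rw [eval_eq_sum]
  exact Finset.sum_congr rfl fun n _ => Subring.mem_center_iff.mp (hcen n) (x ^ n)

lemma lEval_mul_eq_zero_of_coeff_mem_center {χ : F[X]}
    (hcen : ∀ n, χ.coeff n ∈ Subring.center F) {x : F} (hx : χ.eval x = 0) (h : F[X]) :
    lEval x (χ * h) = 0 := by
  induction h using Polynomial.induction_on' with
  | add p q hp hq => rw [mul_add, lEval_add, hp, hq, add_zero]
  | monomial n b =>
    rw [← C_mul_X_pow_eq_monomial, ← mul_assoc, lEval_mul_X_pow, lEval_mul_C,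
      lEval_eq_eval_of_coeff_mem_center hcen, hx, zero_mul, mul_zero]

end LeftEvaluation

lemma IsLeftMinPoly.lEval_eq_of_eqOn {F : Type*} [DivisionRing F] {Δ : Set F} {χ : F[X]}
    (hχ : IsLeftMinPoly Δ χ) (hcen : ∀ n, χ.coeff n ∈ Subring.center F) {f g : F[X]}
    (hfg : ∀ a ∈ Δ, lEval a f = lEval a g) {x : F} (hx : χ.eval x = 0) :
    lEval x f = lEval x g := by
  obtain ⟨h, hh⟩ := hχ.2.2 (f - g) fun a ha => by rw [lEval_sub, hfg a ha, sub_self]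
  rw [← sub_eq_zero, ← lEval_sub, hh, lEval_mul_eq_zero_of_coeff_mem_center hcen hx]

lemma lEval_sum_mul_C_of_lEval_eq_zero {F : Type*} [DivisionRing F] {ι : Type*} [Fintype ι]
    (γ : ι → F) (p : ι → F[X]) (c : ι → F)
    (hvan : ∀ i j, j ≠ i → lEval (γ j) (p i) = 0) (j : ι) :
    lEval (γ j) (∑ i, p i * C (c i)) = lEval (γ j) (p j) * c j := by
  rw [lEval_sum, Finset.sum_eq_single j, lEval_mul_C]
  · intro i _ hij
    rw [lEval_mul_C, hvan i j hij.symm, zero_mul]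
  · exact fun hj => absurd (Finset.mem_univ j) hj

theorem stmt18_general {F : Type*} [DivisionRing F] (a : F) (m : ℕ) (γ : Fin m → F)
    (χ : F[X]) (hcen : ∀ n, χ.coeff n ∈ Subring.center F)
    (hzero : ∀ x : F, (∃ h : F, h ≠ 0 ∧ x = h * a * h⁻¹) → χ.eval x = 0)
    (hbasis : IsLeftMinPoly (Set.range γ) χ)
    (p : Fin m → F[X])
    (hp : ∀ i, IsLeftMinPoly {x | ∃ j, j ≠ i ∧ x = γ j} (p i))
    (hne : ∀ i, lEval (γ i) (p i) ≠ 0)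
    (f : F[X]) (x : F) (hx : ∃ h : F, h ≠ 0 ∧ x = h * a * h⁻¹) :
    lEval x f = ∑ i, lEval x (p i) * (lEval (γ i) (p i))⁻¹ * lEval (γ i) f := by
  set c : Fin m → F := fun i => (lEval (γ i) (p i))⁻¹ * lEval (γ i) f
  have hvan : ∀ i j, j ≠ i → lEval (γ j) (p i) = 0 := fun i j hji => (hp i).2.1 _ ⟨j, hji, rfl⟩
  have hinterp : ∀ y ∈ Set.range γ, lEval y f = lEval y (∑ i, p i * C (c i)) := by
    rintro _ ⟨j, rfl⟩
    rw [lEval_sum_mul_C_of_lEval_eq_zero γ p c hvan, ← mul_assoc, mul_inv_cancel₀ (hne j),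
      one_mul]
  rw [hbasis.lEval_eq_of_eqOn hcen hinterp (hzero x hx), lEval_sum]
  exact Finset.sum_congr rfl fun i _ => by rw [lEval_mul_C, mul_assoc]

/-- Left extension formula: if Δ = {γ₁,…,γ_m} is a left P-basis of the algebraic
conjugacy class V (its left minimal polynomial is the central minimal polynomial
χ_V of V), then f^ℓ(γ) = Σᵢ pᵢ^ℓ(γ)·pᵢ^ℓ(γᵢ)⁻¹·f^ℓ(γᵢ) for every γ ∈ V. -/
theorem stmt18 {F : Type*} [DivisionRing F] (a : F) (m : ℕ) (γ : Fin m → F)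
    (hγinj : Function.Injective γ)
    (hγV : ∀ i, ∃ h : F, h ≠ 0 ∧ γ i = h * a * h⁻¹)
    (χ : F[X]) (hmonic : χ.Monic) (hcen : ∀ n, χ.coeff n ∈ Subring.center F)
    (hzero : ∀ x : F, (∃ h : F, h ≠ 0 ∧ x = h * a * h⁻¹) → χ.eval x = 0)
    (hmin : ∀ g : F[X], g.Monic → (∀ n, g.coeff n ∈ Subring.center F) →
      g.eval a = 0 → χ.degree ≤ g.degree)
    (hbasis : IsLeftMinPoly (Set.range γ) χ)
    (p : Fin m → F[X])
    (hp : ∀ i, IsLeftMinPoly {x | ∃ j, j ≠ i ∧ x = γ j} (p i))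
    (hne : ∀ i, lEval (γ i) (p i) ≠ 0)
    (f : F[X]) (x : F) (hx : ∃ h : F, h ≠ 0 ∧ x = h * a * h⁻¹) :
    lEval x f = ∑ i, lEval x (p i) * (lEval (γ i) (p i))⁻¹ * lEval (γ i) f :=
  stmt18_general a m γ χ hcen hzero hbasis p hp hne f x hx
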